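/- Let f : Ω → ℝ, λ : Ω → (0,∞), and w : Ω → (0,∞) all be continuous, and assume E(x,y) ⊆ Ω for all (x,y) ∈ Ω. Fix an integer N ≥ 1 and a real p with 1 ≤ p < ∞. Then the persistence-surface map is continuous with respect to W_p: for every D ∈ Ω^N and every ε > 0 there exists δ > 0 such that for every D' ∈ Ω^N with W_p(D,D') < δ one has ‖f̃ρ(D) − f̃ρ(D')‖_{L²(w dA)} < ε. -/

import Mathlib

open MeasureTheory Real

noncomputable section

/-- The open first quadrant. -/
def Omega : Set (ℝ × ℝ) := {p | 0 < p.1 ∧ 0 < p.2}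

/-- The closed axis-aligned square centered at `p` with side length `l`. -/
def sqr (l : ℝ) (p : ℝ × ℝ) : Set (ℝ × ℝ) :=
  Set.Icc (p.1 - l / 2) (p.1 + l / 2) ×ˢ Set.Icc (p.2 - l / 2) (p.2 + l / 2)

/-- The square `E(p)` associated to a length function `lam`. -/
def sqE (lam : ℝ × ℝ → ℝ) (p : ℝ × ℝ) : Set (ℝ × ℝ) := sqr (lam p) p

/-- The persistence surface of the diagram `D`. -/
def surf (f lam : ℝ × ℝ → ℝ) {N : ℕ} (D : Fin N → ℝ × ℝ) (z : ℝ × ℝ) : ℝ :=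
  ∑ n, f (D n) * Set.indicator (sqE lam (D n)) 1 z

/-- The identification `ρ(D)` of a persistence diagram as a function. -/
def rho (lam : ℝ × ℝ → ℝ) {N : ℕ} (D : Fin N → ℝ × ℝ) (z : ℝ × ℝ) : ℝ :=
  ∑ n, Set.indicator (sqE lam (D n)) 1 z

/-- The `L²(w dA)` norm, the integral taken over `Omega`. -/
def l2norm (w g : ℝ × ℝ → ℝ) : ℝ :=
  Real.sqrt (∫ z in Omega, (g z) ^ 2 * w z)

/-- The `p`-Wasserstein distance between two `N`-point diagrams (sup-norm ground metric). -/
def Wp (p : ℝ) {N : ℕ} (D D' : Fin N → ℝ × ℝ) : ℝ :=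
  ⨅ σ : Equiv.Perm (Fin N), (∑ n, ‖D n - D' (σ n)‖ ^ p) ^ (1 / p)

/-- The `1/2`-Wasserstein distance (no outer power). -/
def Whalf {N : ℕ} (D D' : Fin N → ℝ × ℝ) : ℝ :=
  ⨅ σ : Equiv.Perm (Fin N), ∑ n, ‖D n - D' (σ n)‖ ^ ((1 : ℝ) / 2)

/-- The `1`-Wasserstein distance. -/
def W1 {N : ℕ} (D D' : Fin N → ℝ × ℝ) : ℝ :=
  ⨅ σ : Equiv.Perm (Fin N), ∑ n, ‖D n - D' (σ n)‖

/-- The persistence image value `I_S(D) = ∫_S f̃ρ(D) w dA`. -/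
def Ipix (f lam w : ℝ × ℝ → ℝ) {N : ℕ} (D : Fin N → ℝ × ℝ) (S : Set (ℝ × ℝ)) : ℝ :=
  ∫ z in S, surf f lam D z * w z

/-- `‖f‖_∞ = sup_Ω |f|`. -/
def supAbs (f : ℝ × ℝ → ℝ) : ℝ := ⨆ p : Omega, |f p.val|

/-- `‖λ‖_∞ = sup_Ω λ`. -/
def supLam (lam : ℝ × ℝ → ℝ) : ℝ := ⨆ p : Omega, lam p.val

/-!
Match the points of `D'` to those of `D` by a near-optimal permutation. The square `E(D'ₙ)`
differs from `E(Dₙ)` only inside a thin annulus around `∂E(Dₙ)`, of area proportional to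
`‖Dₙ - D'ₙ‖ + |λ(Dₙ) - λ(D'ₙ)|`, while on the overlap of the two squares the heights differ by
`|f(Dₙ) - f(D'ₙ)|`. As `w` is bounded on a slightly larger square still inside `Ω`, continuity of
`f` and `λ` makes `∫ (f(Dₙ) χ_{E(Dₙ)} - f(D'ₙ) χ_{E(D'ₙ)})² w` small, and
`(∑ₙ aₙ)² ≤ N ∑ₙ aₙ²` sums the `N` contributions.
-/

open Filter Topology Set
open scoped symmDiff

lemma isOpen_Omega : IsOpen Omega :=
  (isOpen_lt continuous_const continuous_fst).inter (isOpen_lt continuous_const continuous_snd)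

lemma sq_indicator_sub_indicator_le {α : Type*} (s t : Set α) (a b : ℝ) (x : α) :
    (s.indicator (fun _ => a) x - t.indicator (fun _ => b) x) ^ 2 ≤
      s.indicator (fun _ => (a - b) ^ 2) x + (s ∆ t).indicator (fun _ => a ^ 2 + b ^ 2) x := by
  by_cases hs : x ∈ s <;> by_cases ht : x ∈ t <;>
    simp [hs, ht, Set.mem_symmDiff] <;> nlinarith [sq_nonneg (a - b), sq_nonneg a, sq_nonneg b]

section Indicator

variable {α : Type*} [MeasurableSpace α] {μ : Measure α} {s t : Set α} {w : α → ℝ} {a b M : ℝ}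

lemma integrable_and_integral_sq_indicator_sub_mul_le (hs : MeasurableSet s)
    (ht : MeasurableSet t) (hμs : μ s ≠ ⊤) (hμt : μ t ≠ ⊤) (hw : AEStronglyMeasurable w μ)
    (hw0 : ∀ᵐ x ∂μ, 0 ≤ w x) (hwM : ∀ x ∈ s ∪ t, w x ≤ M) :
    Integrable (fun x => (s.indicator (fun _ => a) x - t.indicator (fun _ => b) x) ^ 2 * w x) μ ∧
      ∫ x, (s.indicator (fun _ => a) x - t.indicator (fun _ => b) x) ^ 2 * w x ∂μ ≤
        M * ((a - b) ^ 2 * μ.real s + (a ^ 2 + b ^ 2) * μ.real (s ∆ t)) := by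
  set F := fun x => (s.indicator (fun _ => a) x - t.indicator (fun _ => b) x) ^ 2 * w x
  set G := fun x =>
    M * (s.indicator (fun _ => (a - b) ^ 2) x + (s ∆ t).indicator (fun _ => a ^ 2 + b ^ 2) x)
  have hst : MeasurableSet (s ∆ t) := hs.symmDiff ht
  have hIs : Integrable (s.indicator fun _ => (a - b) ^ 2) μ :=
    (integrable_indicator_iff hs).2 (integrableOn_const hμs)
  have hIst : Integrable ((s ∆ t).indicator fun _ => a ^ 2 + b ^ 2) μ :=
    (integrable_indicator_iff hst).2 (integrableOn_const (measure_symmDiff_ne_top hμs hμt))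
  have hG : Integrable G μ := (hIs.add hIst).const_mul M
  have hFG : ∀ᵐ x ∂μ, 0 ≤ F x ∧ F x ≤ G x := by
    filter_upwards [hw0] with x hx
    refine ⟨mul_nonneg (sq_nonneg _) hx, ?_⟩
    by_cases hx' : x ∈ s ∪ t
    · calc F x ≤ (s.indicator (fun _ => (a - b) ^ 2) x
              + (s ∆ t).indicator (fun _ => a ^ 2 + b ^ 2) x) * w x :=
            mul_le_mul_of_nonneg_right (sq_indicator_sub_indicator_le s t a b x) hx
        _ ≤ _ * M := mul_le_mul_of_nonneg_left (hwM x hx')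
            (add_nonneg (indicator_nonneg (fun _ _ => sq_nonneg _) x)
              (indicator_nonneg (fun _ _ => by positivity) x))
        _ = G x := mul_comm _ _
    · have hxst : x ∉ s ∆ t := fun h => hx' (symmDiff_subset_union h)
      simp only [mem_union, not_or] at hx'
      simp [F, G, hx'.1, hx'.2, hxst]
  have hF : AEStronglyMeasurable F μ :=
    (((measurable_const.indicator hs).sub (measurable_const.indicator ht)).pow_const 2
      ).aestronglyMeasurable.mul hw
  refine ⟨hG.mono' hF (hFG.mono fun x hx => by rw [Real.norm_of_nonneg hx.1]; exact hx.2), ?_⟩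
  calc ∫ x, F x ∂μ ≤ ∫ x, G x ∂μ :=
        integral_mono_of_nonneg (hFG.mono fun x hx => hx.1) hG (hFG.mono fun x hx => hx.2)
    _ = _ := by
      simp only [G, integral_const_mul]
      rw [integral_add hIs hIst, integral_indicator_const _ hs, integral_indicator_const _ hst,
        smul_eq_mul, smul_eq_mul, mul_comm (μ.real s), mul_comm (μ.real (s ∆ t))]

end Indicator

lemma isCompact_sqr (l : ℝ) (q : ℝ × ℝ) : IsCompact (sqr l q) :=
  isCompact_Icc.prod isCompact_Icc

lemma measurableSet_sqr (l : ℝ) (q : ℝ × ℝ) : MeasurableSet (sqr l q) :=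
  measurableSet_Icc.prod measurableSet_Icc

lemma mem_sqr_self {l : ℝ} (hl : 0 ≤ l) (q : ℝ × ℝ) : q ∈ sqr l q :=
  ⟨⟨by linarith, by linarith⟩, by linarith, by linarith⟩

lemma sqr_subset_sqr {l l' : ℝ} {q q' : ℝ × ℝ} (h : dist q' q ≤ (l - l') / 2) :
    sqr l' q' ⊆ sqr l q := by
  rintro z ⟨⟨h1, h2⟩, h3, h4⟩
  rw [Prod.dist_eq, max_le_iff, Real.dist_eq, Real.dist_eq, abs_le, abs_le] at h
  exact ⟨⟨by linarith, by linarith⟩, by linarith, by linarith⟩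

lemma sqr_subset_sqr_of_le {l l' : ℝ} (h : l' ≤ l) (q : ℝ × ℝ) : sqr l' q ⊆ sqr l q :=
  sqr_subset_sqr (by rw [dist_self]; linarith)

lemma exists_gt_sqr_subset_Omega {l : ℝ} {q : ℝ × ℝ} (hl : 0 ≤ l) (h : sqr l q ⊆ Omega) :
    ∃ l' > l, sqr l' q ⊆ Omega := by
  obtain ⟨h1, h2⟩ : 0 < q.1 - l / 2 ∧ 0 < q.2 - l / 2 :=
    h (show (q.1 - l / 2, q.2 - l / 2) ∈ sqr l q from
      ⟨⟨le_rfl, by linarith⟩, le_rfl, by linarith⟩)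
  obtain ⟨l', hl', hl'q⟩ :=
    exists_between (lt_min (by linarith : l < 2 * q.1) (by linarith : l < 2 * q.2))
  refine ⟨l', hl', fun z ⟨⟨h3, _⟩, h4, _⟩ => ⟨?_, ?_⟩⟩
  · linarith [min_le_left (2 * q.1) (2 * q.2)]
  · linarith [min_le_right (2 * q.1) (2 * q.2)]

lemma volume_real_sqr {l : ℝ} (hl : 0 ≤ l) (q : ℝ × ℝ) : volume.real (sqr l q) = l ^ 2 := by
  rw [measureReal_def, sqr, Measure.volume_eq_prod, Measure.prod_prod, Real.volume_Icc,
    Real.volume_Icc, ENNReal.toReal_mul, ENNReal.toReal_ofReal (by linarith),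
    ENNReal.toReal_ofReal (by linarith)]
  ring

lemma symmDiff_sqr_subset {l₀ l u : ℝ} {q₀ q : ℝ × ℝ} (hq : dist q q₀ ≤ u / 4)
    (hl : |l - l₀| ≤ u / 2) : sqr l₀ q₀ ∆ sqr l q ⊆ sqr (l₀ + u) q₀ \ sqr (l₀ - u) q₀ := by
  rw [abs_le] at hl
  have hu : 0 ≤ u := by linarith [dist_nonneg (x := q) (y := q₀)]
  rintro z (⟨hz, hz'⟩ | ⟨hz, hz'⟩)
  · exact ⟨sqr_subset_sqr_of_le (by linarith) q₀ hz,
      fun h => hz' (sqr_subset_sqr (by rw [dist_comm]; linarith) h)⟩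
  · exact ⟨sqr_subset_sqr (by linarith) hz, fun h => hz' (sqr_subset_sqr_of_le (by linarith) q₀ h)⟩

lemma volume_real_symmDiff_sqr_le {l₀ l u : ℝ} {q₀ q : ℝ × ℝ} (hu : u ≤ l₀)
    (hq : dist q q₀ ≤ u / 4) (hl : |l - l₀| ≤ u / 2) :
    volume.real (sqr l₀ q₀ ∆ sqr l q) ≤ 4 * l₀ * u := by
  have hu0 : 0 ≤ u := by linarith [dist_nonneg (x := q) (y := q₀)]
  calc volume.real (sqr l₀ q₀ ∆ sqr l q)
      ≤ volume.real (sqr (l₀ + u) q₀ \ sqr (l₀ - u) q₀) :=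
        measureReal_mono (symmDiff_sqr_subset hq hl)
          (ne_top_of_le_ne_top (isCompact_sqr _ _).measure_lt_top.ne (measure_mono sdiff_subset))
    _ = (l₀ + u) ^ 2 - (l₀ - u) ^ 2 := by
        rw [measureReal_sdiff (sqr_subset_sqr_of_le (by linarith) q₀) (measurableSet_sqr _ _)
          (isCompact_sqr _ _).measure_lt_top.ne, volume_real_sqr (by linarith),
          volume_real_sqr (by linarith)]
    _ = 4 * l₀ * u := by ring

section Surface

variable {f lam w : ℝ × ℝ → ℝ}

def bump (f lam : ℝ × ℝ → ℝ) (q : ℝ × ℝ) : ℝ × ℝ → ℝ :=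
  (sqE lam q).indicator fun _ => f q

lemma surf_eq_sum_bump {N : ℕ} (D : Fin N → ℝ × ℝ) (z : ℝ × ℝ) :
    surf f lam D z = ∑ n, bump f lam (D n) z := by
  refine Finset.sum_congr rfl fun n _ => ?_
  by_cases hz : z ∈ sqE lam (D n) <;> simp [bump, hz]

lemma surf_comp_perm {N : ℕ} (D : Fin N → ℝ × ℝ) (σ : Equiv.Perm (Fin N)) :
    surf f lam (D ∘ σ) = surf f lam D :=
  funext fun z => Equiv.sum_comp σ fun n => f (D n) * (sqE lam (D n)).indicator 1 z

lemma integrableOn_and_integral_sq_bump_sub_le (hwc : ContinuousOn w Omega)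
    (hw0 : ∀ z ∈ Omega, 0 ≤ w z) {q₀ q : ℝ × ℝ} {l₁ M u : ℝ} (hE₀ : sqE lam q₀ ⊆ Omega)
    (hK : sqr l₁ q₀ ⊆ Omega) (hwM : ∀ z ∈ sqr l₁ q₀, w z ≤ M) (hM0 : 0 ≤ M)
    (hu₀ : u ≤ lam q₀) (hu₁ : lam q₀ + u ≤ l₁)
    (hdist : dist q q₀ ≤ u / 4) (hlam : |lam q - lam q₀| ≤ u / 2) :
    IntegrableOn (fun z => (bump f lam q₀ z - bump f lam q z) ^ 2 * w z) Omega ∧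
      ∫ z in Omega, (bump f lam q₀ z - bump f lam q z) ^ 2 * w z ≤
        M * ((f q₀ - f q) ^ 2 * lam q₀ ^ 2 + (f q₀ ^ 2 + f q ^ 2) * (4 * lam q₀ * u)) := by
  have hu : 0 ≤ u := by linarith [dist_nonneg (x := q) (y := q₀)]
  have hqK : sqE lam q ⊆ sqr l₁ q₀ := sqr_subset_sqr (by linarith [(abs_le.1 hlam).2])
  have hsK : sqE lam q₀ ⊆ sqr l₁ q₀ := sqr_subset_sqr_of_le (by linarith) q₀
  have hΩ := isOpen_Omega.measurableSet
  obtain ⟨hint, hle⟩ := integrable_and_integral_sq_indicator_sub_mul_le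
    (μ := volume.restrict Omega) (s := sqE lam q₀) (t := sqE lam q) (a := f q₀) (b := f q)
    (measurableSet_sqr _ _) (measurableSet_sqr _ _) (isCompact_sqr _ _).measure_lt_top.ne
    (isCompact_sqr _ _).measure_lt_top.ne (hwc.aestronglyMeasurable hΩ)
    (ae_restrict_of_forall_mem hΩ hw0) fun z hz => hwM z (union_subset hsK hqK hz)
  refine ⟨hint, hle.trans ?_⟩
  rw [measureReal_restrict_apply' hΩ, measureReal_restrict_apply' hΩ, inter_eq_left.2 hE₀,
    inter_eq_left.2 (symmDiff_subset_union.trans (union_subset hE₀ (hqK.trans hK)))]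
  gcongr
  · exact (volume_real_sqr (hu.trans hu₀) q₀).le
  · exact volume_real_symmDiff_sqr_le hu₀ hdist hlam

theorem tendsto_integral_sq_bump_sub (hfc : ContinuousOn f Omega) (hlamc : ContinuousOn lam Omega)
    (hwc : ContinuousOn w Omega) (hw0 : ∀ z ∈ Omega, 0 ≤ w z) {q₀ : ℝ × ℝ} (hq₀ : q₀ ∈ Omega)
    (hl₀ : 0 < lam q₀) (hE₀ : sqE lam q₀ ⊆ Omega) :
    (∀ᶠ q in 𝓝[Omega] q₀,
      IntegrableOn (fun z => (bump f lam q₀ z - bump f lam q z) ^ 2 * w z) Omega) ∧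
    Tendsto (fun q => ∫ z in Omega, (bump f lam q₀ z - bump f lam q z) ^ 2 * w z)
      (𝓝[Omega] q₀) (𝓝 0) := by
  set l₀ := lam q₀
  obtain ⟨l₁, hl₀₁, hK⟩ := exists_gt_sqr_subset_Omega hl₀.le hE₀
  obtain ⟨M, hM⟩ := (isCompact_sqr l₁ q₀).bddAbove_image (hwc.mono hK)
  have hwM : ∀ z ∈ sqr l₁ q₀, w z ≤ M := fun z hz => hM (mem_image_of_mem w hz)
  have hM0 : 0 ≤ M := (hw0 q₀ hq₀).trans (hwM q₀ (mem_sqr_self (by linarith) q₀))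
  -- `E(q₀) ∆ E(q)` lies in an annulus of area `4 l₀ u q` (`volume_real_symmDiff_sqr_le`)
  set u := fun q => 4 * dist q q₀ + 2 * |lam q - l₀|
  have hu : Tendsto u (𝓝[Omega] q₀) (𝓝 0) := by
    have : ContinuousWithinAt u Omega q₀ :=
      ((continuous_id.dist continuous_const).continuousWithinAt.const_mul 4).add
        (((hlamc q₀ hq₀).sub continuousWithinAt_const).abs.const_mul 2)
    simpa [u, l₀] using this.tendsto
  set B := fun q => M * ((f q₀ - f q) ^ 2 * l₀ ^ 2 + (f q₀ ^ 2 + f q ^ 2) * (4 * l₀ * u q))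
  have hB : Tendsto B (𝓝[Omega] q₀) (𝓝 0) := by
    have hf : Tendsto f (𝓝[Omega] q₀) (𝓝 (f q₀)) := hfc q₀ hq₀
    have := ((((tendsto_const_nhds (x := f q₀)).sub hf).pow 2).mul_const (l₀ ^ 2)).add
      (((tendsto_const_nhds (x := f q₀ ^ 2)).add (hf.pow 2)).mul (hu.const_mul (4 * l₀)))
    simpa [B] using this.const_mul M
  have hbound : ∀ᶠ q in 𝓝[Omega] q₀,
      IntegrableOn (fun z => (bump f lam q₀ z - bump f lam q z) ^ 2 * w z) Omega ∧
      ∫ z in Omega, (bump f lam q₀ z - bump f lam q z) ^ 2 * w z ≤ B q := by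
    filter_upwards [hu.eventually (eventually_le_nhds (lt_min hl₀ (sub_pos.2 hl₀₁)))] with q hq
    exact integrableOn_and_integral_sq_bump_sub_le hwc hw0 hE₀ hK hwM hM0
      (hq.trans (min_le_left _ _)) (by linarith [min_le_right l₀ (l₁ - l₀)])
      (by linarith [abs_nonneg (lam q - l₀)]) (by linarith [dist_nonneg (x := q) (y := q₀)])
  exact ⟨hbound.mono fun _ h => h.1,
    tendsto_of_tendsto_of_tendsto_of_le_of_le' tendsto_const_nhds hB
      (Eventually.of_forall fun q => setIntegral_nonneg isOpen_Omega.measurableSet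
        fun z hz => mul_nonneg (sq_nonneg _) (hw0 z hz))
      (hbound.mono fun _ h => h.2)⟩

end Surface

lemma sq_sum_mul_le_card_mul {ι : Type*} (s : Finset ι) (a : ι → ℝ) {w : ℝ} (hw : 0 ≤ w) :
    (∑ i ∈ s, a i) ^ 2 * w ≤ s.card * ∑ i ∈ s, a i ^ 2 * w := by
  rw [← Finset.sum_mul, ← mul_assoc]
  exact mul_le_mul_of_nonneg_right sq_sum_le_card_mul_sum_sq hw

theorem tendsto_integral_sq_surf_sub {f lam w : ℝ × ℝ → ℝ} (hfc : ContinuousOn f Omega)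
    (hlamc : ContinuousOn lam Omega) (hwc : ContinuousOn w Omega) (hw0 : ∀ z ∈ Omega, 0 ≤ w z)
    {N : ℕ} {D : Fin N → ℝ × ℝ} (hD : ∀ n, D n ∈ Omega) (hl : ∀ n, 0 < lam (D n))
    (hE : ∀ n, sqE lam (D n) ⊆ Omega) :
    Tendsto (fun D' => ∫ z in Omega, (surf f lam D z - surf f lam D' z) ^ 2 * w z)
      (𝓝[univ.pi fun _ => Omega] D) (𝓝 0) := by
  set G := fun (n : Fin N) (q z : ℝ × ℝ) => (bump f lam (D n) z - bump f lam q z) ^ 2 * w z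
  have hbump n := tendsto_integral_sq_bump_sub hfc hlamc hwc hw0 (hD n) (hl n) (hE n)
  have heval (n : Fin N) : Tendsto (fun D' : Fin N → ℝ × ℝ => D' n)
      (𝓝[univ.pi fun _ => Omega] D) (𝓝[Omega] (D n)) :=
    (continuous_apply n).continuousWithinAt.tendsto_nhdsWithin fun _ hD' => hD' n (mem_univ n)
  have hint : ∀ᶠ D' in 𝓝[univ.pi fun _ => Omega] D, ∀ n, IntegrableOn (G n (D' n)) Omega :=
    eventually_all.2 fun n => heval n |>.eventually (hbump n).1
  have hlim : Tendsto (fun D' => N * ∑ n, ∫ z in Omega, G n (D' n) z)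
      (𝓝[univ.pi fun _ => Omega] D) (𝓝 0) := by
    simpa using (tendsto_finsetSum _ fun n _ => (hbump n).2.comp (heval n)).const_mul (N : ℝ)
  refine tendsto_of_tendsto_of_tendsto_of_le_of_le' tendsto_const_nhds hlim
    (Eventually.of_forall fun D' => setIntegral_nonneg isOpen_Omega.measurableSet
      fun z hz => mul_nonneg (sq_nonneg _) (hw0 z hz)) ?_
  filter_upwards [hint] with D' hD'
  calc ∫ z in Omega, (surf f lam D z - surf f lam D' z) ^ 2 * w z
      ≤ ∫ z in Omega, N * ∑ n, G n (D' n) z := by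
        refine integral_mono_of_nonneg (ae_restrict_of_forall_mem isOpen_Omega.measurableSet
          fun z hz => mul_nonneg (sq_nonneg _) (hw0 z hz))
          ((integrable_finsetSum _ fun n _ => hD' n).const_mul _)
          (ae_restrict_of_forall_mem isOpen_Omega.measurableSet fun z hz => ?_)
        simpa [G, surf_eq_sum_bump, ← Finset.sum_sub_distrib] using sq_sum_mul_le_card_mul
          Finset.univ (fun n => bump f lam (D n) z - bump f lam (D' n) z) (hw0 z hz)
    _ = N * ∑ n, ∫ z in Omega, G n (D' n) z := by
        rw [integral_const_mul, integral_finsetSum _ fun n _ => hD' n]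

lemma exists_perm_forall_dist_lt_of_Wp_lt {p δ : ℝ} (hp : 0 < p) {N : ℕ}
    {D D' : Fin N → ℝ × ℝ} (h : Wp p D D' < δ) :
    ∃ σ : Equiv.Perm (Fin N), ∀ n, dist (D' (σ n)) (D n) < δ := by
  obtain ⟨σ, hσ⟩ := exists_lt_of_ciInf_lt h
  refine ⟨σ, fun n => lt_of_le_of_lt ?_ hσ⟩
  have hsingle : ‖D n - D' (σ n)‖ ^ p ≤ ∑ m, ‖D m - D' (σ m)‖ ^ p :=
    Finset.single_le_sum (f := fun m => ‖D m - D' (σ m)‖ ^ p)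
      (fun m _ => Real.rpow_nonneg (norm_nonneg _) p) (Finset.mem_univ n)
  calc dist (D' (σ n)) (D n) = (‖D n - D' (σ n)‖ ^ p) ^ (1 / p) := by
        rw [dist_eq_norm', one_div, Real.rpow_rpow_inv (norm_nonneg _) hp.ne']
    _ ≤ _ := by gcongr

theorem stmt4_general (f lam w : ℝ × ℝ → ℝ)
    (hfc : ContinuousOn f Omega) (hlamc : ContinuousOn lam Omega)
    (hwc : ContinuousOn w Omega)
    (hlam0 : ∀ q ∈ Omega, 0 < lam q) (hw0 : ∀ q ∈ Omega, 0 < w q)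
    (hE : ∀ q ∈ Omega, sqE lam q ⊆ Omega)
    (N : ℕ) (p : ℝ) (hp : 1 ≤ p)
    (D : Fin N → ℝ × ℝ) (hD : ∀ n, D n ∈ Omega) :
    ∀ ε > 0, ∃ δ > 0, ∀ D' : Fin N → ℝ × ℝ, (∀ n, D' n ∈ Omega) →
      Wp p D D' < δ →
      l2norm w (fun z => surf f lam D z - surf f lam D' z) < ε := by
  intro ε hε
  have hlim := tendsto_integral_sq_surf_sub hfc hlamc hwc (fun z hz => (hw0 z hz).le) hD
    (fun n => hlam0 _ (hD n)) (fun n => hE _ (hD n))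
  obtain ⟨δ, hδ, hclose⟩ := Metric.eventually_nhds_iff.1 <| eventually_nhdsWithin_iff.1 <|
    hlim.eventually (eventually_lt_nhds (pow_pos hε 2))
  refine ⟨δ, hδ, fun D' hD' hW => ?_⟩
  obtain ⟨σ, hσ⟩ := exists_perm_forall_dist_lt_of_Wp_lt (by linarith) hW
  have h := hclose ((dist_pi_lt_iff hδ).2 hσ) fun n _ => hD' (σ n)
  rw [show (fun n => D' (σ n)) = D' ∘ σ from rfl, surf_comp_perm] at h
  exact (Real.sqrt_lt' hε).2 h

/-- continuity of the persistence-surface map with respect to `W_p`. -/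
theorem stmt4 (f lam w : ℝ × ℝ → ℝ)
    (hfc : ContinuousOn f Omega) (hlamc : ContinuousOn lam Omega)
    (hwc : ContinuousOn w Omega)
    (hlam0 : ∀ q ∈ Omega, 0 < lam q) (hw0 : ∀ q ∈ Omega, 0 < w q)
    (hE : ∀ q ∈ Omega, sqE lam q ⊆ Omega)
    (N : ℕ) (hN : 1 ≤ N) (p : ℝ) (hp : 1 ≤ p)
    (D : Fin N → ℝ × ℝ) (hD : ∀ n, D n ∈ Omega) :
    ∀ ε > 0, ∃ δ > 0, ∀ D' : Fin N → ℝ × ℝ, (∀ n, D' n ∈ Omega) →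
      Wp p D D' < δ →
      l2norm w (fun z => surf f lam D z - surf f lam D' z) < ε :=
  stmt4_general f lam w hfc hlamc hwc hlam0 hw0 hE N p hp D hD
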